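/- arXiv:1506.04441 — 3 statements merged into one kernel-verified Lean document; each statement's English description precedes it below -/
import Mathlib

section
/- Let i ≥ 1 and p, r ∈ ℤ. Then: (1) if r ≠ i and r ≠ -i, then s_i(c^r_p) = c^r_p; (2) if r = i, then s_i(c^r_p) = c^{i+1}_p + t_i · c^{i+1}_{p-1}; (3) if r = -i, then s_i(c^r_p) = c^{-i+1}_p - t_{i+1} · c^{-i+1}_{p-1}. -/
/-!
The polynomial ring `R2 = ℚ[c₁, c₂, …, t₁, t₂, …]`: the variable `Sum.inl p` (for `p ≥ 1`)
is `c_p`, and `Sum.inr i` (for `i ≥ 1`) is `t_i`.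
-/

noncomputable section
open MvPolynomial Finset
open scoped Classical

abbrev R2 : Type := MvPolynomial (ℕ ⊕ ℕ) ℚ

/-- The variable `t_i`. -/
def Tv (i : ℕ) : R2 := X (Sum.inr i)

/-- `c_p`, with the conventions `c_0 = 1` and `c_p = 0` for `p < 0`. -/
def Cv (p : ℤ) : R2 := if p < 0 then 0 else if p = 0 then 1 else X (Sum.inl p.toNat)

/-- The complete homogeneous symmetric polynomial `h_j` evaluated on a list. -/
def hfun : List R2 → ℕ → R2
  | [], j => if j = 0 then 1 else 0
  | a :: L, j => ∑ i ∈ Finset.range (j + 1), a ^ i * hfun L (j - i)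

/-- The elementary symmetric polynomial `e_j` evaluated on a list. -/
def efun : List R2 → ℕ → R2
  | [], j => if j = 0 then 1 else 0
  | _ :: _, 0 => 1
  | a :: L, j + 1 => efun L (j + 1) + a * efun L j

/-- The list `(-t_1, …, -t_r)`. -/
def negT (r : ℕ) : List R2 := (List.range r).map fun i => -Tv (i + 1)

/-- `h^r_j(-t)`: complete homogeneous for `r ≥ 0`, elementary `e^{-r}_j(-t)` for `r < 0`. -/
def hmt (r : ℤ) (j : ℕ) : R2 :=
  if 0 ≤ r then hfun (negT r.toNat) j else efun (negT (-r).toNat) j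

/-- `c^r_p := Σ_{j=0}^p c_{p-j} h^r_j(-t)`. -/
def cc (r p : ℤ) : R2 := ∑ j ∈ Finset.range (p.toNat + 1), Cv (p - j) * hmt r j

/-- `a^s_p := (1/2)c_p + Σ_{j=1}^p c_{p-j} h^s_j(-t)`. -/
def aa (s p : ℤ) : R2 :=
  C (1/2 : ℚ) * Cv p + ∑ j ∈ Finset.Icc 1 p.toNat, Cv (p - j) * hmt s j

/-- Images of the variables under the automorphism `s_i`. -/
def sImg : ℕ → ℕ ⊕ ℕ → R2
  | 0, Sum.inr j => if j = 1 then -Tv 2 else if j = 2 then -Tv 1 else Tv j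
  | 0, Sum.inl p =>
      if p = 0 then X (Sum.inl 0)
      else Cv p - 2 * (Tv 1 + Tv 2) *
        ∑ j ∈ Finset.range p, (-1 : R2) ^ j *
          (∑ a ∈ Finset.range (j + 1), Tv 1 ^ a * Tv 2 ^ (j - a)) * Cv ((p : ℤ) - 1 - j)
  | i + 1, Sum.inr j =>
      if j = i + 1 then Tv (i + 2) else if j = i + 2 then Tv (i + 1) else Tv j
  | _ + 1, Sum.inl p => X (Sum.inl p)

/-- The ring automorphism `s_i` of `R2`. -/
def sA (i : ℕ) : R2 →ₐ[ℚ] R2 := aeval (sImg i)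

/-- The fraction field of `R2`. -/
abbrev KK : Type := FractionRing R2

/-- The canonical embedding of `R2` into its fraction field. -/
def toK : R2 →+* KK := algebraMap R2 KK

/-- The denominator `t_1 + t_2` (for `i = 0`) resp. `t_{i+1} - t_i` (for `i ≥ 1`). -/
def dden (i : ℕ) : R2 := if i = 0 then Tv 1 + Tv 2 else Tv (i + 1) - Tv i

/-- The divided difference operator `∂_i`, with values in the fraction field. -/
def dd (i : ℕ) (f : R2) : KK := (toK f - toK (sA i f)) / toK (dden i)


/-!
The automorphism `s_i` (`i ≥ 1`) fixes every `c_p` and only swaps `t_i` and `t_{i+1}`. Since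
`h_j` and `e_j` are symmetric functions of their list of variables, `s_i` fixes `h^r_j(-t)`
unless the variable list `-t_1, …, -t_{|r|}` contains exactly one of `t_i, t_{i+1}`, i.e.
unless `r = ±i`. In those two cases `s_i` trades `-t_i` for `-t_{i+1}`, and the recursions
`h_{j+1}(x, L) = h_{j+1}(L) + x h_j(x, L)` and `e_{j+1}(x, L) = e_{j+1}(L) + x e_j(L)` give
`s_i h^i_{j+1}(-t) = h^{i+1}_{j+1}(-t) + t_i h^{i+1}_j(-t)` and
`s_i e^i_{j+1}(-t) = e^{i-1}_{j+1}(-t) - t_{i+1} e^{i-1}_j(-t)`.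
Summing these against `c_{p-j}` yields the formulas for `c^{±i}_p`.
-/

lemma hfun_cons (a : R2) (L : List R2) (j : ℕ) :
    hfun (a :: L) j = ∑ i ∈ range (j + 1), a ^ i * hfun L (j - i) := rfl

lemma hfun_zero (L : List R2) : hfun L 0 = 1 := by
  induction L with
  | nil => rfl
  | cons a L ih => simp [hfun_cons, ih]

lemma hfun_cons_succ (a : R2) (L : List R2) (j : ℕ) :
    hfun (a :: L) (j + 1) = hfun L (j + 1) + a * hfun (a :: L) j := by
  rw [hfun_cons, sum_range_succ', hfun_cons, mul_sum, add_comm]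
  simp only [pow_zero, one_mul, Nat.sub_zero, pow_succ, Nat.succ_sub_succ, mul_assoc, mul_left_comm]

lemma hfun_swap (a b : R2) (L : List R2) (j : ℕ) :
    hfun (a :: b :: L) j = hfun (b :: a :: L) j := by
  simp only [hfun_cons, mul_sum]
  rw [sum_comm' (t' := range (j + 1)) (s' := fun k => range (j - k + 1))
    fun i k => by simp only [mem_range]; omega]
  refine sum_congr rfl fun k _ => sum_congr rfl fun i _ => ?_
  rw [Nat.sub_right_comm]
  ring

lemma hfun_perm {L L' : List R2} (h : L.Perm L') (j : ℕ) : hfun L j = hfun L' j := by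
  induction h generalizing j with
  | nil => rfl
  | cons a _ ih => simp only [hfun_cons, ih]
  | swap a b L => exact hfun_swap b a L j
  | trans _ _ ih₁ ih₂ => rw [ih₁, ih₂]

lemma efun_zero (L : List R2) : efun L 0 = 1 := by cases L <;> rfl

lemma efun_cons_succ (a : R2) (L : List R2) (j : ℕ) :
    efun (a :: L) (j + 1) = efun L (j + 1) + a * efun L j := rfl

lemma efun_swap (a b : R2) (L : List R2) (j : ℕ) :
    efun (a :: b :: L) j = efun (b :: a :: L) j := by
  match j with
  | 0 => rfl
  | 1 => simp only [efun_cons_succ, efun_zero]; ring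
  | j + 2 => simp only [efun_cons_succ]; ring

lemma efun_perm {L L' : List R2} (h : L.Perm L') (j : ℕ) : efun L j = efun L' j := by
  induction h generalizing j with
  | nil => rfl
  | cons a _ ih =>
      cases j with
      | zero => rw [efun_zero, efun_zero]
      | succ j => rw [efun_cons_succ, efun_cons_succ, ih, ih]
  | swap a b L => exact efun_swap b a L j
  | trans _ _ ih₁ ih₂ => rw [ih₁, ih₂]

lemma hmt_zero (r : ℤ) : hmt r 0 = 1 := by
  unfold hmt
  split_ifs
  · exact hfun_zero _
  · exact efun_zero _

lemma cc_eq_Cv_add_sum (s p : ℤ) :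
    cc s p = Cv p + ∑ j ∈ range p.toNat, Cv (p - (j + 1 : ℕ)) * hmt s (j + 1) := by
  rw [cc, sum_range_succ', hmt_zero, Nat.cast_zero, sub_zero, mul_one, add_comm]

lemma cc_sub_one (s p : ℤ) :
    cc s (p - 1) = ∑ j ∈ range p.toNat, Cv (p - (j + 1 : ℕ)) * hmt s j := by
  rcases le_or_gt p 0 with hp | hp
  · rw [cc, Int.toNat_of_nonpos (by omega), Int.toNat_of_nonpos hp, sum_range_one, sum_range_zero,
      Cv, if_pos (by omega), zero_mul]
  · rw [cc, show p.toNat = (p - 1).toNat + 1 by omega]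
    refine sum_congr rfl fun j _ => ?_
    rw [Nat.cast_succ, sub_add_eq_sub_sub_swap]

section RingHom

variable {F : Type*} [FunLike F R2 R2] [RingHomClass F R2 R2]

lemma map_hfun (f : F) (L : List R2) (j : ℕ) : f (hfun L j) = hfun (L.map f) j := by
  induction L generalizing j with
  | nil => simp only [hfun, List.map_nil]; split_ifs <;> simp
  | cons a L ih => simp only [hfun_cons, List.map_cons, map_sum, map_mul, map_pow, ih]

lemma map_efun (f : F) (L : List R2) (j : ℕ) : f (efun L j) = efun (L.map f) j := by
  induction L generalizing j with
  | nil => simp only [efun, List.map_nil]; split_ifs <;> simp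
  | cons a L ih =>
      cases j with
      | zero => rw [efun_zero, efun_zero, map_one]
      | succ j => simp only [efun_cons_succ, List.map_cons, map_add, map_mul, ih]

lemma map_cc_of_map_hmt (f : F) (hf : ∀ p, f (Cv p) = Cv p) {r s : ℤ} {x : R2}
    (h : ∀ j, f (hmt r (j + 1)) = hmt s (j + 1) + x * hmt s j) (p : ℤ) :
    f (cc r p) = cc s p + x * cc s (p - 1) := by
  rw [cc_eq_Cv_add_sum, cc_eq_Cv_add_sum, cc_sub_one, map_add, hf, map_sum, mul_sum, add_assoc,
    ← sum_add_distrib]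
  congr 1
  refine sum_congr rfl fun j _ => ?_
  rw [map_mul, hf, h]
  ring

end RingHom

lemma hmt_natCast (n j : ℕ) : hmt (n : ℤ) j = hfun (negT n) j := by
  rw [hmt, if_pos (Int.natCast_nonneg n), Int.toNat_natCast]

lemma hmt_neg_natCast (n j : ℕ) : hmt (-(n : ℤ)) j = efun (negT n) j := by
  cases n with
  | zero => simp only [Nat.cast_zero, neg_zero]; rfl
  | succ n => rw [hmt, if_neg (by omega), neg_neg, Int.toNat_natCast]

lemma negT_succ (n : ℕ) : negT (n + 1) = negT n ++ [-Tv (n + 1)] := by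
  simp [negT, List.range_succ]

lemma sA_succ_Tv (k j : ℕ) :
    sA (k + 1) (Tv j) = if j = k + 1 then Tv (k + 2) else if j = k + 2 then Tv (k + 1) else Tv j :=
  aeval_X _ _

lemma sA_succ_Cv (k : ℕ) (p : ℤ) : sA (k + 1) (Cv p) = Cv p := by
  unfold Cv
  split_ifs
  · exact map_zero _
  · exact map_one _
  · exact aeval_X _ _

lemma map_sA_negT_of_le {k n : ℕ} (hn : n ≤ k) : (negT n).map (sA (k + 1)) = negT n := by
  rw [negT, List.map_map]
  refine List.map_congr_left fun m hm => ?_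
  rw [List.mem_range] at hm
  simp only [Function.comp_apply, map_neg, sA_succ_Tv, if_neg (show m + 1 ≠ k + 1 by omega),
    if_neg (show m + 1 ≠ k + 2 by omega)]

lemma map_sA_negT_self (k : ℕ) :
    (negT (k + 1)).map (sA (k + 1)) = negT k ++ [-Tv (k + 2)] := by
  rw [negT_succ, List.map_append, map_sA_negT_of_le le_rfl]
  simp [sA_succ_Tv]

lemma map_sA_negT_perm {k n : ℕ} (hn : n ≠ k + 1) :
    ((negT n).map (sA (k + 1))).Perm (negT n) := by
  induction n with
  | zero => rfl
  | succ n ih =>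
    rcases lt_trichotomy n (k + 1) with hlt | rfl | hgt
    · rw [map_sA_negT_of_le (by omega)]
    · rw [negT_succ, List.map_append, map_sA_negT_self, negT_succ]
      simpa [sA_succ_Tv] using (List.Perm.swap (-Tv (k + 1)) (-Tv (k + 2)) []).append_left (negT k)
    · rw [negT_succ, List.map_append]
      refine (ih (by omega)).append ?_
      simp [sA_succ_Tv, show n ≠ k by omega, show n ≠ k + 1 by omega]

lemma sA_succ_hmt_of_ne {k : ℕ} {r : ℤ} (h₁ : r ≠ (k + 1 : ℕ)) (h₂ : r ≠ -(k + 1 : ℕ)) (j : ℕ) :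
    sA (k + 1) (hmt r j) = hmt r j := by
  unfold hmt
  split_ifs
  · rw [map_hfun]
    exact hfun_perm (map_sA_negT_perm (by omega)) j
  · rw [map_efun]
    exact efun_perm (map_sA_negT_perm (by omega)) j

lemma negT_append_perm_cons (k : ℕ) :
    (negT k ++ [-Tv (k + 2)]).Perm (-Tv (k + 2) :: negT k) :=
  List.perm_append_comm

lemma sA_succ_hmt_self (k j : ℕ) :
    sA (k + 1) (hmt (k + 1 : ℕ) (j + 1))
      = hmt (k + 2 : ℕ) (j + 1) + Tv (k + 1) * hmt (k + 2 : ℕ) j := by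
  have hperm : (negT (k + 2)).Perm (-Tv (k + 1) :: -Tv (k + 2) :: negT k) := by
    rw [negT_succ, negT_succ]
    simpa using List.perm_append_comm (l₁ := negT k) (l₂ := [-Tv (k + 1), -Tv (k + 2)])
  simp only [hmt_natCast, map_hfun, map_sA_negT_self, hfun_perm (negT_append_perm_cons k),
    hfun_perm hperm, hfun_cons_succ]
  ring

lemma sA_succ_hmt_neg_self (k j : ℕ) :
    sA (k + 1) (hmt (-(k + 1 : ℕ)) (j + 1))
      = hmt (-(k : ℤ)) (j + 1) + -Tv (k + 2) * hmt (-(k : ℤ)) j := by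
  simp only [hmt_neg_natCast, map_efun, map_sA_negT_self, efun_perm (negT_append_perm_cons k),
    efun_cons_succ]

theorem statement2 (i : ℕ) (hi : 1 ≤ i) (p r : ℤ) :
    (r ≠ (i : ℤ) → r ≠ -(i : ℤ) → sA i (cc r p) = cc r p) ∧
    (r = (i : ℤ) →
      sA i (cc r p) = cc ((i : ℤ) + 1) p + Tv i * cc ((i : ℤ) + 1) (p - 1)) ∧
    (r = -(i : ℤ) →
      sA i (cc r p) = cc (-(i : ℤ) + 1) p - Tv (i + 1) * cc (-(i : ℤ) + 1) (p - 1)) := by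
  obtain ⟨k, rfl⟩ : ∃ k, i = k + 1 := ⟨i - 1, by omega⟩
  refine ⟨fun h₁ h₂ => ?_, fun hr => ?_, fun hr => ?_⟩
  · simp only [cc, map_sum, map_mul, sA_succ_Cv, sA_succ_hmt_of_ne h₁ h₂]
  · rw [hr, show ((k + 1 : ℕ) : ℤ) + 1 = (k + 2 : ℕ) by omega]
    exact map_cc_of_map_hmt _ (sA_succ_Cv k) (sA_succ_hmt_self k) p
  · rw [hr, show -((k + 1 : ℕ) : ℤ) + 1 = -(k : ℤ) by omega, sub_eq_add_neg, ← neg_mul]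
    exact map_cc_of_map_hmt _ (sA_succ_Cv k) (sA_succ_hmt_neg_self k) p
end
end

section
/- Let p, r ∈ ℤ. Then: (1) if |r| ≥ 2, then s_0(c^r_p) = c^r_p; (2) s_0(c^1_p) = c^2_p - t_1·c^2_{p-1}; (3) s_0(c^0_p) = c^2_p - (t_1+t_2)·c^2_{p-1} + t_1 t_2 · c^2_{p-2}; (4) s_0(c^{-1}_p) = c^1_p - (t_1+t_2)·c^1_{p-1} + t_1 t_2 · c^1_{p-2}. -/
/-!
The polynomial ring `R2 = ℚ[c₁, c₂, …, t₁, t₂, …]`: the variable `Sum.inl p` (for `p ≥ 1`)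
is `c_p`, and `Sum.inr i` (for `i ≥ 1`) is `t_i`.
-/

noncomputable section
open MvPolynomial Finset
open scoped Classical

namespace St3
abbrev PS := PowerSeries R2
def s0 : R2 →+* R2 := (sA 0).toRingHom
def S : PS →+* PS := PowerSeries.map s0
def pP (a : R2) : PS := 1 - PowerSeries.C a * PowerSeries.X
def HS (L : List R2) : PS := PowerSeries.mk (hfun L)
def ES (L : List R2) : PS := PowerSeries.mk (efun L)
def Cser : PS := PowerSeries.mk fun n => Cv n
def Hser (r : ℤ) : PS := PowerSeries.mk fun n => hmt r n
def ccoe (p : ℤ) (f : PS) : R2 := if 0 ≤ p then PowerSeries.coeff p.toNat f else 0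

lemma HS_nil : HS [] = 1 := by
  ext n; cases n <;> simp [HS, hfun, PowerSeries.coeff_one]

lemma hfun_cons_succ (a : R2) (L : List R2) (k : ℕ) :
    hfun (a :: L) (k+1) = a * hfun (a :: L) k + hfun L (k+1) := by
  show (∑ i ∈ Finset.range (k + 2), a ^ i * hfun L (k + 1 - i))
      = a * (∑ i ∈ Finset.range (k + 1), a ^ i * hfun L (k - i)) + hfun L (k+1)
  rw [Finset.sum_range_succ']
  have h : ∀ i ∈ Finset.range (k+1), a ^ (i+1) * hfun L (k + 1 - (i+1))
      = a * (a ^ i * hfun L (k - i)) := by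
    intro i _
    have h2 : k + 1 - (i + 1) = k - i := by omega
    rw [h2, pow_succ]; ring
  rw [Finset.sum_congr rfl h, ← Finset.mul_sum]
  simp

lemma HS_cons (a : R2) (L : List R2) : HS (a :: L) * pP a = HS L := by
  have key : HS (a :: L) * pP a
      = HS (a :: L) - PowerSeries.C a * (PowerSeries.X * HS (a :: L)) := by
    unfold pP; ring
  apply PowerSeries.ext; intro n
  rw [key, map_sub, PowerSeries.coeff_C_mul]
  cases n with
  | zero => simp [HS, hfun]
  | succ k =>
    rw [PowerSeries.coeff_succ_X_mul]
    simp only [HS, PowerSeries.coeff_mk]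
    rw [hfun_cons_succ]; ring
lemma constantCoeff_pP (a : R2) : PowerSeries.constantCoeff (pP a) = 1 := by
  simp [pP]

lemma ne_zero_of_cc_one {f : PS} (h : PowerSeries.constantCoeff f = 1) : f ≠ 0 := by
  intro h0; rw [h0] at h; simp at h

lemma HS_prod (L : List R2) : HS L * (L.map pP).prod = 1 := by
  induction L with
  | nil => simp [HS_nil]
  | cons a L ih =>
    calc HS (a :: L) * ((a :: L).map pP).prod
        = (HS (a :: L) * pP a) * (L.map pP).prod := by simp [List.map_cons]; ring
      _ = 1 := by rw [HS_cons]; exact ih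

lemma efun_zero (L : List R2) : efun L 0 = 1 := by
  cases L <;> simp [efun]

lemma ES_cons (a : R2) (L : List R2) : ES (a :: L) = pP (-a) * ES L := by
  have key : pP (-a) * ES L = ES L + PowerSeries.C a * (PowerSeries.X * ES L) := by
    unfold pP; push_cast [map_neg]; ring
  apply PowerSeries.ext; intro n
  rw [key, map_add, PowerSeries.coeff_C_mul]
  cases n with
  | zero => simp [ES, efun_zero]
  | succ k =>
    rw [PowerSeries.coeff_succ_X_mul]
    simp only [ES, PowerSeries.coeff_mk]
    show efun (a :: L) (k + 1) = _
    rw [show efun (a :: L) (k+1) = efun L (k+1) + a * efun L k from rfl]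

lemma ES_prod (L : List R2) : ES L = (L.map fun a => pP (-a)).prod := by
  induction L with
  | nil =>
    apply PowerSeries.ext; intro n
    cases n <;> simp [ES, efun, PowerSeries.coeff_one]
  | cons a L ih => rw [List.map_cons, List.prod_cons, ES_cons, ih]

lemma list_prod_range (f : ℕ → PS) (n : ℕ) :
    ((List.range n).map f).prod = ∏ i ∈ Finset.range n, f i := by
  induction n with
  | zero => simp
  | succ k ih => rw [List.range_succ, Finset.prod_range_succ, List.map_append, List.prod_append, ih]; simp

lemma Hser_nonneg (m : ℕ) : Hser (m : ℤ) = HS (negT m) := by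
  apply PowerSeries.ext; intro n
  simp [Hser, HS, hmt]

lemma Hser_neg (m : ℕ) (hm : 1 ≤ m) : Hser (-(m : ℤ)) = ES (negT m) := by
  apply PowerSeries.ext; intro n
  have h1 : ¬ (0 ≤ -(m : ℤ)) := by omega
  simp [Hser, ES, hmt, h1]
  intro h; omega

lemma negT_map_pP (m : ℕ) :
    ((negT m).map pP).prod = ∏ i ∈ Finset.range m, pP (-Tv (i+1)) := by
  rw [negT, List.map_map, list_prod_range]
  rfl

lemma negT_map_pP' (m : ℕ) :
    ((negT m).map fun a => pP (-a)).prod = ∏ i ∈ Finset.range m, pP (Tv (i+1)) := by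
  rw [negT, List.map_map, list_prod_range]
  apply Finset.prod_congr rfl
  intro i _
  show pP (- - Tv (i+1)) = _
  rw [neg_neg]

lemma Hser_mul_Q (m : ℕ) : Hser (m : ℤ) * ∏ i ∈ Finset.range m, pP (-Tv (i+1)) = 1 := by
  rw [Hser_nonneg, ← negT_map_pP]; exact HS_prod _

lemma Hser_neg_eq (m : ℕ) (hm : 1 ≤ m) :
    Hser (-(m : ℤ)) = ∏ i ∈ Finset.range m, pP (Tv (i+1)) := by
  rw [Hser_neg m hm, ES_prod, negT_map_pP']
lemma s0_Tv1 : s0 (Tv 1) = -Tv 2 := by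
  show aeval (sImg 0) (X (Sum.inr 1)) = _
  rw [aeval_X]; rfl

lemma s0_Tv2 : s0 (Tv 2) = -Tv 1 := by
  show aeval (sImg 0) (X (Sum.inr 2)) = _
  rw [aeval_X]; rfl

lemma s0_Tv (i : ℕ) (h : 3 ≤ i) : s0 (Tv i) = Tv i := by
  show aeval (sImg 0) (X (Sum.inr i)) = _
  rw [aeval_X]
  show (if i = 1 then -Tv 2 else if i = 2 then -Tv 1 else Tv i) = Tv i
  rw [if_neg (by omega), if_neg (by omega)]

lemma S_pP (a : R2) : S (pP a) = pP (s0 a) := by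
  unfold S pP
  rw [map_sub, map_one, map_mul, PowerSeries.map_C, PowerSeries.map_X]

lemma hfun_pair (j : ℕ) : hfun [-Tv 1, -Tv 2] j
    = (-1 : R2) ^ j * ∑ a ∈ Finset.range (j + 1), Tv 1 ^ a * Tv 2 ^ (j - a) := by
  have h1 : ∀ m : ℕ, hfun [-Tv 2] m = (-Tv 2) ^ m := by
    intro m
    show (∑ i ∈ Finset.range (m + 1), (-Tv 2) ^ i * hfun [] (m - i)) = _
    rw [Finset.sum_range_succ]
    have : ∀ i ∈ Finset.range m, (-Tv 2) ^ i * hfun [] (m - i) = 0 := by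
      intro i hi
      have : ¬ (m - i = 0) := by simp at hi; omega
      show (-Tv 2) ^ i * (if m - i = 0 then 1 else 0) = 0
      rw [if_neg this, mul_zero]
    rw [Finset.sum_eq_zero this]
    simp [hfun]
  show (∑ i ∈ Finset.range (j + 1), (-Tv 1) ^ i * hfun [-Tv 2] (j - i)) = _
  rw [Finset.mul_sum]
  apply Finset.sum_congr rfl
  intro i hi
  have hij : i ≤ j := by simp at hi; omega
  rw [h1]
  have h2 : (-1 : R2) ^ i * ((-1 : R2) ^ (j - i)) = (-1) ^ j := by
    rw [← pow_add]; congr 1; omega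
  calc (-Tv 1) ^ i * (-Tv 2) ^ (j-i)
      = ((-1:R2) ^ i * (-1:R2) ^ (j-i)) * (Tv 1 ^ i * Tv 2 ^ (j-i)) := by
        rw [neg_pow (Tv 1) i, neg_pow (Tv 2) (j-i)]; ring
    _ = (-1:R2) ^ j * (Tv 1 ^ i * Tv 2 ^ (j-i)) := by rw [h2]

lemma s0_Cv (n : ℕ) : s0 (Cv (n : ℤ))
    = Cv n - 2 * (Tv 1 + Tv 2) * ∑ j ∈ Finset.range n,
        hfun [-Tv 1, -Tv 2] j * Cv ((n : ℤ) - 1 - j) := by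
  cases n with
  | zero => simp [Cv, map_one]
  | succ k =>
    have h0 : ¬ ((k+1 : ℤ) < 0) := by omega
    have h1 : ¬ ((k+1 : ℤ) = 0) := by omega
    have hC : Cv ((k+1 : ℕ) : ℤ) = X (Sum.inl (k+1)) := by
      rw [Cv, if_neg (by push_cast; omega), if_neg (by push_cast; omega)]
      norm_num
    rw [hC]
    show aeval (sImg 0) (X (Sum.inl (k+1))) = _
    rw [aeval_X]
    show (if k + 1 = 0 then X (Sum.inl 0)
      else Cv (k+1) - 2 * (Tv 1 + Tv 2) *
        ∑ j ∈ Finset.range (k+1), (-1 : R2) ^ j *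
          (∑ a ∈ Finset.range (j + 1), Tv 1 ^ a * Tv 2 ^ (j - a)) * Cv (((k+1 : ℕ) : ℤ) - 1 - j)) = _
    rw [if_neg (Nat.succ_ne_zero k)]
    rw [show ((k:ℤ)+1) = ((k+1:ℕ):ℤ) by push_cast; ring]
    rw [hC]
    congr 1
    congr 1
    apply Finset.sum_congr rfl
    intro j _
    rw [hfun_pair]
lemma Cv_cast (n j : ℕ) (h : j ≤ n) : Cv ((n : ℤ) - j) = Cv ((n - j : ℕ) : ℤ) := by
  congr 1; omega

def Gser : PS := HS [-Tv 1, -Tv 2]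

lemma SCser : S Cser = Cser
    - PowerSeries.C (2 * (Tv 1 + Tv 2)) * (PowerSeries.X * (Gser * Cser)) := by
  apply PowerSeries.ext; intro n
  rw [map_sub, PowerSeries.coeff_C_mul]
  have hl : PowerSeries.coeff n (S Cser) = s0 (Cv n) := by
    simp [S, Cser, PowerSeries.coeff_map]
  rw [hl, s0_Cv]
  have hc : PowerSeries.coeff n Cser = Cv n := by simp [Cser]
  rw [hc]
  congr 1
  cases n with
  | zero => simp
  | succ k =>
    rw [PowerSeries.coeff_succ_X_mul, PowerSeries.coeff_mul,
      Finset.Nat.sum_antidiagonal_eq_sum_range_succ_mk]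
    refine congrArg ((2 * (Tv 1 + Tv 2) : R2) * ·) ?_
    apply Finset.sum_congr rfl
    intro j hj
    have hjk : j ≤ k := by simp at hj; omega
    have : ((k+1 : ℕ) : ℤ) - 1 - j = ((k - j : ℕ) : ℤ) := by omega
    rw [this]
    simp only [Gser, HS, Cser, PowerSeries.coeff_mk]

lemma Gser_mul : Gser * (pP (-Tv 1) * pP (-Tv 2)) = 1 := by
  have := HS_prod [-Tv 1, -Tv 2]
  simpa [Gser, mul_assoc] using this

lemma key3 : S Cser * (pP (-Tv 1) * pP (-Tv 2)) = Cser * (pP (Tv 1) * pP (Tv 2)) := by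
  rw [SCser]
  have expand : pP (Tv 1) * pP (Tv 2)
      = pP (-Tv 1) * pP (-Tv 2) - PowerSeries.C (2 * (Tv 1 + Tv 2)) * PowerSeries.X := by
    unfold pP
    rw [map_neg, map_neg, map_mul, map_add, show PowerSeries.C (2:R2) = 2 from map_ofNat _ 2]
    ring
  rw [expand]
  have h1 : (Cser - PowerSeries.C (2 * (Tv 1 + Tv 2)) * (PowerSeries.X * (Gser * Cser)))
        * (pP (-Tv 1) * pP (-Tv 2))
      = Cser * (pP (-Tv 1) * pP (-Tv 2))
        - PowerSeries.C (2 * (Tv 1 + Tv 2)) * PowerSeries.X * Cser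
          * (Gser * (pP (-Tv 1) * pP (-Tv 2))) := by ring
  rw [h1, Gser_mul]
  ring
lemma hfun_zero (L : List R2) : hfun L 0 = 1 := by
  induction L with
  | nil => simp [hfun]
  | cons a L ih =>
    show (∑ i ∈ Finset.range 1, a ^ i * hfun L (0 - i)) = 1
    simp [ih]

lemma hmt_zero (r : ℤ) : hmt r 0 = 1 := by
  unfold hmt; split
  · exact hfun_zero _
  · exact efun_zero _

lemma cancel {A B u : PS} (hu : PowerSeries.constantCoeff u = 1) (h : A * u = B * u) :
    A = B :=
  mul_right_cancel₀ (ne_zero_of_cc_one hu) h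

lemma cc_eq (r p : ℤ) : cc r p = ccoe p (Cser * Hser r) := by
  by_cases hp : 0 ≤ p
  · rw [ccoe, if_pos hp]
    rw [mul_comm Cser (Hser r), PowerSeries.coeff_mul,
      Finset.Nat.sum_antidiagonal_eq_sum_range_succ_mk]
    unfold cc
    apply Finset.sum_congr rfl
    intro j hj
    have hjn : j ≤ p.toNat := by simp at hj; omega
    have h1 : p - (j : ℤ) = ((p.toNat - j : ℕ) : ℤ) := by omega
    rw [h1]
    simp only [Hser, Cser, PowerSeries.coeff_mk]
    ring
  · rw [ccoe, if_neg hp]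
    unfold cc
    have h0 : p.toNat = 0 := by omega
    rw [h0]
    rw [Finset.sum_range_one]
    have : Cv (p - (0:ℕ)) = 0 := by
      rw [Cv, if_pos (by push_cast; omega)]
    rw [this, zero_mul]

lemma ccoe_map (p : ℤ) (f : PS) : s0 (ccoe p f) = ccoe p (S f) := by
  unfold ccoe; split
  · rw [S, PowerSeries.coeff_map]
  · exact map_zero s0

lemma ccoe_pP (a : R2) (p : ℤ) (f : PS) :
    ccoe p (pP a * f) = ccoe p f - a * ccoe (p - 1) f := by
  have key : pP a * f = f - PowerSeries.C a * (PowerSeries.X * f) := by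
    unfold pP; ring
  rw [key]
  by_cases hp : 0 ≤ p
  · rw [ccoe, if_pos hp, map_sub, PowerSeries.coeff_C_mul]
    by_cases hp0 : p = 0
    · subst hp0
      have hm1 : ccoe ((0:ℤ) - 1) f = 0 := by rw [ccoe, if_neg (by omega)]
      rw [hm1, mul_zero, sub_zero]
      simp [ccoe, PowerSeries.coeff_zero_eq_constantCoeff_apply]
    · have h1 : p.toNat = (p-1).toNat + 1 := by omega
      rw [h1, PowerSeries.coeff_succ_X_mul]
      rw [ccoe, if_pos hp, ccoe, if_pos (by omega), h1]
  · rw [ccoe, if_neg hp, ccoe, if_neg hp, ccoe, if_neg (by omega)]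
    ring

lemma negT_one : negT 1 = [-Tv 1] := by rw [negT]; rfl
lemma negT_two : negT 2 = [-Tv 1, -Tv 2] := by rw [negT]; rfl

lemma Hser_zero : Hser 0 = 1 := by
  have : Hser ((0:ℕ):ℤ) = HS (negT 0) := Hser_nonneg 0
  rw [show ((0:ℕ):ℤ) = 0 from rfl] at this
  rw [this, show negT 0 = [] from rfl, HS_nil]

lemma Hser_one_mul : Hser 1 * pP (-Tv 1) = 1 := by
  rw [show (1:ℤ) = ((1:ℕ):ℤ) from rfl, Hser_nonneg, negT_one, HS_cons, HS_nil]

lemma Hser_two_mul : Hser 2 * (pP (-Tv 1) * pP (-Tv 2)) = 1 := by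
  rw [show (2:ℤ) = ((2:ℕ):ℤ) from rfl, Hser_nonneg, negT_two, ← mul_assoc,
    HS_cons, HS_cons, HS_nil]

lemma s0_neg_Tv1 : s0 (-Tv 1) = Tv 2 := by rw [map_neg, s0_Tv1, neg_neg]
lemma s0_neg_Tv2 : s0 (-Tv 2) = Tv 1 := by rw [map_neg, s0_Tv2, neg_neg]

lemma S_pP_neg1 : S (pP (-Tv 1)) = pP (Tv 2) := by rw [S_pP, s0_neg_Tv1]
lemma S_pP_neg2 : S (pP (-Tv 2)) = pP (Tv 1) := by rw [S_pP, s0_neg_Tv2]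
lemma S_pP_pos1 : S (pP (Tv 1)) = pP (-Tv 2) := by rw [S_pP, s0_Tv1]
lemma S_pP_pos2 : S (pP (Tv 2)) = pP (-Tv 1) := by rw [S_pP, s0_Tv2]

lemma cc_one_u : PowerSeries.constantCoeff (pP (-Tv 1) * pP (-Tv 2)) = 1 := by
  rw [map_mul, constantCoeff_pP, constantCoeff_pP, mul_one]

lemma claim2 : S (Cser * Hser 1) = pP (Tv 1) * (Cser * Hser 2) := by
  apply cancel cc_one_u
  have SH1 : S (Hser 1) * pP (Tv 2) = 1 := by
    rw [← S_pP_neg1, ← map_mul, Hser_one_mul, map_one]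
  calc S (Cser * Hser 1) * (pP (-Tv 1) * pP (-Tv 2))
      = (S Cser * (pP (-Tv 1) * pP (-Tv 2))) * S (Hser 1) := by rw [map_mul]; ring
    _ = (Cser * (pP (Tv 1) * pP (Tv 2))) * S (Hser 1) := by rw [key3]
    _ = (Cser * pP (Tv 1)) * (S (Hser 1) * pP (Tv 2)) := by ring
    _ = Cser * pP (Tv 1) := by rw [SH1, mul_one]
    _ = (pP (Tv 1) * (Cser * Hser 2)) * (pP (-Tv 1) * pP (-Tv 2)) := by
          rw [show (pP (Tv 1) * (Cser * Hser 2)) * (pP (-Tv 1) * pP (-Tv 2))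
              = (pP (Tv 1) * Cser) * (Hser 2 * (pP (-Tv 1) * pP (-Tv 2))) from by ring,
            Hser_two_mul, mul_one]
          ring

lemma claim3 : S (Cser * Hser 0) = pP (Tv 1) * (pP (Tv 2) * (Cser * Hser 2)) := by
  apply cancel cc_one_u
  calc S (Cser * Hser 0) * (pP (-Tv 1) * pP (-Tv 2))
      = S Cser * (pP (-Tv 1) * pP (-Tv 2)) := by rw [Hser_zero, mul_one]
    _ = Cser * (pP (Tv 1) * pP (Tv 2)) := key3
    _ = (pP (Tv 1) * (pP (Tv 2) * (Cser * Hser 2))) * (pP (-Tv 1) * pP (-Tv 2)) := by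
          rw [show (pP (Tv 1) * (pP (Tv 2) * (Cser * Hser 2))) * (pP (-Tv 1) * pP (-Tv 2))
              = (pP (Tv 1) * pP (Tv 2) * Cser) * (Hser 2 * (pP (-Tv 1) * pP (-Tv 2))) from by ring,
            Hser_two_mul, mul_one]
          ring

lemma Hser_neg_one : Hser (-1) = pP (Tv 1) := by
  rw [show (-1 : ℤ) = -((1:ℕ):ℤ) from rfl, Hser_neg 1 le_rfl, negT_one, ES_cons, neg_neg]
  have : ES [] = 1 := by
    apply PowerSeries.ext; intro n
    cases n <;> simp [ES, efun, PowerSeries.coeff_one]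
  rw [this, mul_one]

lemma claim4 : S (Cser * Hser (-1)) = pP (Tv 1) * (pP (Tv 2) * (Cser * Hser 1)) := by
  apply cancel (u := pP (-Tv 1)) (constantCoeff_pP _)
  calc S (Cser * Hser (-1)) * pP (-Tv 1)
      = (S Cser * (pP (-Tv 1) * pP (-Tv 2))) := by
          rw [map_mul, Hser_neg_one, S_pP_pos1]; ring
    _ = Cser * (pP (Tv 1) * pP (Tv 2)) := key3
    _ = (pP (Tv 1) * (pP (Tv 2) * (Cser * Hser 1))) * pP (-Tv 1) := by
          rw [show (pP (Tv 1) * (pP (Tv 2) * (Cser * Hser 1))) * pP (-Tv 1)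
              = (pP (Tv 1) * pP (Tv 2) * Cser) * (Hser 1 * pP (-Tv 1)) from by ring,
            Hser_one_mul, mul_one]
          ring
lemma claim1pos (m : ℕ) (hm : 2 ≤ m) : S (Cser * Hser (m : ℤ)) = Cser * Hser (m : ℤ) := by
  set Q2 : PS := ∏ i ∈ Finset.Ico 2 m, pP (-Tv (i+1)) with hQ2
  have split : (∏ i ∈ Finset.range m, pP (-Tv (i+1)))
      = pP (-Tv 1) * pP (-Tv 2) * Q2 := by
    rw [Finset.range_eq_Ico, ← Finset.prod_Ico_consecutive _ (Nat.zero_le 2) hm]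
    refine congrArg (· * _) ?_
    rw [show Finset.Ico 0 2 = Finset.range 2 from Nat.Ico_zero_eq_range 2]
    rw [Finset.prod_range_succ, Finset.prod_range_one]
  have SQ2 : S Q2 = Q2 := by
    rw [hQ2, map_prod]
    apply Finset.prod_congr rfl
    intro i hi
    rw [S_pP, map_neg, s0_Tv (i+1) (by simp [Finset.mem_Ico] at hi; omega)]
  have hQone : PowerSeries.constantCoeff (∏ i ∈ Finset.range m, pP (-Tv (i+1))) = 1 := by
    rw [map_prod]
    apply Finset.prod_eq_one
    intro i _
    exact constantCoeff_pP _
  apply cancel hQone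
  have HQ := Hser_mul_Q m
  have SQ : S (∏ i ∈ Finset.range m, pP (-Tv (i+1))) = pP (Tv 2) * (pP (Tv 1) * Q2) := by
    rw [split, map_mul, map_mul, S_pP_neg1, S_pP_neg2, SQ2]; ring
  calc S (Cser * Hser (m:ℤ)) * ∏ i ∈ Finset.range m, pP (-Tv (i+1))
      = (S Cser * (pP (-Tv 1) * pP (-Tv 2))) * (S (Hser (m:ℤ)) * Q2) := by
        rw [map_mul, split]; ring
    _ = Cser * (pP (Tv 1) * pP (Tv 2)) * (S (Hser (m:ℤ)) * Q2) := by rw [key3]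
    _ = Cser * (S (Hser (m:ℤ)) * (pP (Tv 2) * (pP (Tv 1) * Q2))) := by ring
    _ = Cser * (S (Hser (m:ℤ)) * S (∏ i ∈ Finset.range m, pP (-Tv (i+1)))) := by
        rw [SQ]
    _ = Cser * S (Hser (m:ℤ) * ∏ i ∈ Finset.range m, pP (-Tv (i+1))) := by rw [map_mul]
    _ = Cser := by rw [HQ, map_one, mul_one]
    _ = (Cser * Hser (m:ℤ)) * ∏ i ∈ Finset.range m, pP (-Tv (i+1)) := by
        rw [mul_assoc, HQ, mul_one]

lemma claim1neg (m : ℕ) (hm : 2 ≤ m) :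
    S (Cser * Hser (-(m : ℤ))) = Cser * Hser (-(m : ℤ)) := by
  have hN := Hser_neg_eq m (by omega)
  set N2 : PS := ∏ i ∈ Finset.Ico 2 m, pP (Tv (i+1)) with hN2
  have split : (∏ i ∈ Finset.range m, pP (Tv (i+1)))
      = pP (Tv 1) * pP (Tv 2) * N2 := by
    rw [Finset.range_eq_Ico, ← Finset.prod_Ico_consecutive _ (Nat.zero_le 2) hm]
    refine congrArg (· * _) ?_
    rw [show Finset.Ico 0 2 = Finset.range 2 from Nat.Ico_zero_eq_range 2]
    rw [Finset.prod_range_succ, Finset.prod_range_one]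
  have SN2 : S N2 = N2 := by
    rw [hN2, map_prod]
    apply Finset.prod_congr rfl
    intro i hi
    rw [S_pP, s0_Tv (i+1) (by simp [Finset.mem_Ico] at hi; omega)]
  calc S (Cser * Hser (-(m:ℤ)))
      = S Cser * (pP (-Tv 2) * pP (-Tv 1) * N2) := by
        rw [map_mul, hN, split, map_mul, map_mul, S_pP_pos1, S_pP_pos2, SN2]
    _ = (S Cser * (pP (-Tv 1) * pP (-Tv 2))) * N2 := by ring
    _ = Cser * (pP (Tv 1) * pP (Tv 2)) * N2 := by rw [key3]
    _ = Cser * Hser (-(m:ℤ)) := by rw [hN, split]; ring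

lemma main_eq (r p : ℤ) (h : S (Cser * Hser r) = Cser * Hser r) :
    sA 0 (cc r p) = cc r p := by
  show s0 (cc r p) = cc r p
  rw [cc_eq, ccoe_map, h]

end St3

theorem statement3 (p r : ℤ) :
    (2 ≤ |r| → sA 0 (cc r p) = cc r p) ∧
    (sA 0 (cc 1 p) = cc 2 p - Tv 1 * cc 2 (p - 1)) ∧
    (sA 0 (cc 0 p) = cc 2 p - (Tv 1 + Tv 2) * cc 2 (p - 1) + Tv 1 * Tv 2 * cc 2 (p - 2)) ∧
    (sA 0 (cc (-1) p) = cc 1 p - (Tv 1 + Tv 2) * cc 1 (p - 1) + Tv 1 * Tv 2 * cc 1 (p - 2)) := by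
  refine ⟨?_, ?_, ?_, ?_⟩
  · intro h
    rcases le_or_gt 0 r with h0 | h0
    · obtain ⟨m, rfl⟩ : ∃ m : ℕ, r = (m : ℤ) := ⟨r.toNat, by omega⟩
      have h2 : 2 ≤ m := by
        rw [abs_of_nonneg h0] at h; exact_mod_cast h
      exact St3.main_eq _ _ (St3.claim1pos m h2)
    · obtain ⟨m, rfl⟩ : ∃ m : ℕ, r = -(m : ℤ) := ⟨(-r).toNat, by omega⟩
      have h2 : 2 ≤ m := by
        rw [abs_neg, abs_of_nonneg (Int.natCast_nonneg m)] at h; exact_mod_cast h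
      exact St3.main_eq _ _ (St3.claim1neg m h2)
  · show St3.s0 (cc 1 p) = _
    rw [St3.cc_eq 1 p, St3.ccoe_map, St3.claim2, St3.ccoe_pP]
    rw [← St3.cc_eq, ← St3.cc_eq]
  · show St3.s0 (cc 0 p) = _
    rw [St3.cc_eq 0 p, St3.ccoe_map, St3.claim3]
    simp only [St3.ccoe_pP]
    rw [show p - 1 - 1 = p - 2 from by ring]
    simp only [← St3.cc_eq]
    ring
  · show St3.s0 (cc (-1) p) = _
    rw [St3.cc_eq (-1) p, St3.ccoe_map, St3.claim4]
    simp only [St3.ccoe_pP]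
    rw [show p - 1 - 1 = p - 2 from by ring]
    simp only [← St3.cc_eq]
    ring
end
end

section
/- Let ρ be a composition (a finitely supported sequence of nonnegative integers). Then Σ_{0 ≤ α ≤ ρ} (-1)^{|α|}·2^{#(ρ-α) + #(α)} equals 1 if ρ = 0 and equals 0 if ρ ≠ 0, where the sum runs over all compositions α with α_i ≤ ρ_i for every i. (In particular, for a single integer s ≥ 0, Σ_{i=0}^s (-1)^i·2^{#(s-i) + #(i)} = δ_{s,0}.) -/
/-!
Compositions are finitely supported sequences of nonnegative integers, `ℕ →₀ ℕ`.
For a composition `α`, `|α|` is the sum of its entries and `#(α)` is the number of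
nonzero entries; for a single integer `a ≥ 0`, `#(a) = 1` if `a ≠ 0` and `0` otherwise.
-/

open Finset

/-- `|α|`, the sum of the entries of a composition. -/
def csize (α : ℕ →₀ ℕ) : ℕ := α.sum fun _ n => n

/-- `#(α)`, the number of nonzero entries of a composition. -/
def csupp (α : ℕ →₀ ℕ) : ℕ := α.support.card

/-- `#(a)` for a single integer. -/
def nsupp (a : ℕ) : ℕ := if a = 0 then 0 else 1

/-!
The summand is multiplicative over the coordinates: for `α ≤ ρ` it is the product over
`i ∈ supp ρ` of `(-1)^{α_i} 2^{#(ρ_i - α_i) + #(α_i)}`, and the box `0 ≤ α ≤ ρ` is the product of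
the intervals `[0, ρ_i]`. So the sum is the product of the one-variable sums with `s = ρ_i`, and it
suffices that these vanish for `s > 0`. For `s = n + 1` every term with `i ≤ n` has `#(s - i) = 1`,
and the partial sums `∑_{i ≤ n} (-1)^i 2^{#(i)}` equal `(-1)^n`, so the one-variable sum is
`2 (-1)^n + 2 (-1)^{n+1} = 0`.
-/

theorem Finset.sum_finsupp_prod {ι α R : Type*} [Zero α] [CommSemiring R] (s : Finset ι)
    (t : ι → Finset α) (g : ι → α → R) :
    ∑ f ∈ s.finsupp t, ∏ i ∈ s, g i (f i) = ∏ i ∈ s, ∑ a ∈ t i, g i a := by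
  classical
  rw [Finset.finsupp, sum_map, prod_sum]
  refine sum_congr rfl fun p _ => ?_
  rw [← prod_attach s]
  exact prod_congr rfl fun i _ => by simp [Finsupp.indicator_of_mem i.2]

theorem Finsupp.Iic_eq_finsupp {ι α : Type*} [AddCommMonoid α] [PartialOrder α]
    [IsBotZeroClass α] [OrderBot α] [LocallyFiniteOrder α] [DecidableEq ι] [DecidableEq α]
    (f : ι →₀ α) : Iic f = f.support.finsupp fun i => Iic (f i) := by
  rw [Iic_eq_Icc, bot_eq_zero, Icc_eq, support_zero, empty_union]
  congr with i : 1
  rw [coe_rangeIcc, zero_apply, ← bot_eq_zero, Iic_eq_Icc]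

theorem csize_eq_sum {α : ℕ →₀ ℕ} {s : Finset ℕ} (hs : α.support ⊆ s) :
    csize α = ∑ i ∈ s, α i :=
  Finsupp.sum_of_support_subset α hs _ fun _ _ => rfl

theorem csupp_eq_sum_nsupp {α : ℕ →₀ ℕ} {s : Finset ℕ} (hs : α.support ⊆ s) :
    csupp α = ∑ i ∈ s, nsupp (α i) := by
  have h : s.filter (fun i => α i ≠ 0) = α.support := by
    ext i
    rw [mem_filter, Finsupp.mem_support_iff]
    exact ⟨And.right, fun h => ⟨hs (Finsupp.mem_support_iff.2 h), h⟩⟩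
  rw [csupp, ← h, card_filter]
  exact sum_congr rfl fun i _ => ite_not _ _ _

theorem neg_one_pow_csize_mul_two_pow_csupp_eq_prod {ρ α : ℕ →₀ ℕ} (h : α ≤ ρ) :
    (-1 : ℤ) ^ csize α * 2 ^ (csupp (ρ - α) + csupp α) =
      ∏ i ∈ ρ.support, (-1 : ℤ) ^ α i * 2 ^ (nsupp (ρ i - α i) + nsupp (α i)) := by
  have hα := Finsupp.support_mono h
  have hρα := Finsupp.support_mono (tsub_le_self : ρ - α ≤ ρ)
  simp only [csize_eq_sum hα, csupp_eq_sum_nsupp hα, csupp_eq_sum_nsupp hρα, Finsupp.tsub_apply,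
    ← sum_add_distrib, prod_mul_distrib, prod_pow_eq_pow_sum]

theorem sum_range_neg_one_pow_mul_two_pow_nsupp (n : ℕ) :
    ∑ i ∈ range (n + 1), (-1 : ℤ) ^ i * 2 ^ nsupp i = (-1) ^ n := by
  induction n with
  | zero => simp [nsupp]
  | succ n ih =>
    rw [sum_range_succ, ih, nsupp, if_neg n.succ_ne_zero]
    ring

theorem sum_range_neg_one_pow_mul_two_pow_nsupp_add_nsupp (s : ℕ) :
    ∑ i ∈ range (s + 1), (-1 : ℤ) ^ i * 2 ^ (nsupp (s - i) + nsupp i) =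
      if s = 0 then 1 else 0 := by
  rcases s with _ | n
  · simp [nsupp]
  have hinner : ∀ i ∈ range (n + 1),
      (-1 : ℤ) ^ i * 2 ^ (nsupp (n + 1 - i) + nsupp i) = 2 * ((-1) ^ i * 2 ^ nsupp i) := by
    intro i hi
    rw [nsupp, if_neg (Nat.sub_ne_zero_of_lt (mem_range.1 hi)), pow_add]
    ring
  rw [sum_range_succ, sum_congr rfl hinner, ← mul_sum, sum_range_neg_one_pow_mul_two_pow_nsupp,
    Nat.sub_self, nsupp, nsupp, if_pos rfl, if_neg n.succ_ne_zero, if_neg n.succ_ne_zero]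
  ring

theorem statement13 :
    (∀ ρ : ℕ →₀ ℕ,
      (∑ α ∈ Finset.Iic ρ, (-1 : ℤ) ^ csize α * 2 ^ (csupp (ρ - α) + csupp α)) =
        if ρ = 0 then 1 else 0) ∧
    (∀ s : ℕ,
      (∑ i ∈ Finset.range (s + 1), (-1 : ℤ) ^ i * 2 ^ (nsupp (s - i) + nsupp i)) =
        if s = 0 then 1 else 0) := by
  refine ⟨fun ρ => ?_, sum_range_neg_one_pow_mul_two_pow_nsupp_add_nsupp⟩
  have hfactor : ∀ i ∈ ρ.support,
      ∑ a ∈ Iic (ρ i), (-1 : ℤ) ^ a * 2 ^ (nsupp (ρ i - a) + nsupp a) = 0 := by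
    intro i hi
    rw [← Nat.range_succ_eq_Iic, sum_range_neg_one_pow_mul_two_pow_nsupp_add_nsupp,
      if_neg (Finsupp.mem_support_iff.1 hi)]
  rw [sum_congr rfl fun α hα => neg_one_pow_csize_mul_two_pow_csupp_eq_prod (mem_Iic.1 hα), Finsupp.Iic_eq_finsupp,
    sum_finsupp_prod _ _ fun i a => (-1 : ℤ) ^ a * 2 ^ (nsupp (ρ i - a) + nsupp a)]
  split_ifs with hρ
  · simp [hρ]
  · obtain ⟨i, hi⟩ := Finsupp.support_nonempty_iff.2 hρ
    exact prod_eq_zero hi (hfactor i hi)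
end
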